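/- arXiv:2504.21710 — 2 statements merged into one kernel-verified Lean document; each statement's English description precedes it below -/
import Mathlib

section
/- In the same IPCW setting (C ⫫ D | Z, positivity), with U = D ∧ C and Δ = 1{D ≤ C}, one has E[ (1{U ≤ t}Δ + 1{U > t}) / G(U ∧ t | Z) · (U ∧ t) | Z ] = E[ D ∧ t | Z ]. Hence the IPCW-weighted truncated observed time is conditionally unbiased for the restricted survival time D ∧ t. -/
open MeasureTheory Filter

/-!
The weight `1{U ≤ t}Δ + 1{U > t}` is nonzero only on `{D ≤ t, D ≤ C}`, where `U ∧ t = D = D ∧ t`,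
and on `{t < D, t < C}`, where `U ∧ t = t = D ∧ t`. Hence the IPCW summand factors as
`(D ∧ t) / G(D ∧ t | Z)` times a censoring factor `1{D ≤ t}1{D ∧ t ≤ C} + 1{t < D}1{t < C}`.
Given `(D, Z)` the first factor is known and bounded by positivity, while conditional independence
turns the censoring factor into `G(D ∧ t | Z)`; the two cancel, and the tower property descends
from `(D, Z)` to `Z`.
-/

theorem integrable_of_condExp_ae_eq_of_ae_ne_zero {Ω : Type*} {m mΩ : MeasurableSpace Ω}
    {μ : Measure Ω} {X g : Ω → ℝ} (hX : μ[X | m] =ᵐ[μ] g) (hg : ∀ᵐ ω ∂μ, g ω ≠ 0) :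
    Integrable X μ := by
  by_contra hXi
  rw [condExp_of_not_integrable hXi] at hX
  have hμ : μ = 0 := ae_eq_bot.1 <| eventually_false_iff_eq_bot.1 <|
    (hX.and hg).mono fun _ h => h.2 h.1.symm
  exact hXi (hμ ▸ integrable_zero_measure)

theorem ipcw_summand_eq (d c t : ℝ) (g : ℝ → ℝ) :
    ((if min d c ≤ t ∧ d ≤ c then (1 : ℝ) else 0) + (if t < min d c then (1 : ℝ) else 0)) /
        g (min (min d c) t) * min (min d c) t =
      min d t / g (min d t) *
        ((if d ≤ t then if min d t ≤ c then (1 : ℝ) else 0 else 0) +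
          (if t < d then if t < c then (1 : ℝ) else 0 else 0)) := by
  rcases le_or_gt d t with hdt | htd <;> rcases le_or_gt d c with hdc | hcd
  · simp [hdt, hdc, not_lt.2 hdt, div_eq_inv_mul]
  · simp [hdt, not_lt.2 hdt, not_le.2 hcd, min_eq_right hcd.le,
      not_lt.2 (hcd.le.trans hdt)]
  · simp [htd, hdc, not_le.2 htd, not_le.2 (htd.trans_le hdc), div_eq_inv_mul]
  · rcases le_or_gt c t with hct | htc
    · simp [hct, not_le.2 hcd, not_le.2 htd, not_lt.2 hct, min_eq_right hcd.le]
    · simp [htd, htc, not_le.2 htd, lt_min htd htc, not_le.2 (lt_min htd htc),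
        min_eq_right (lt_min htd htc).le, min_eq_right htd.le, div_eq_inv_mul]

section

variable {Ω : Type*} {m mΩ : MeasurableSpace Ω} {μ : Measure Ω}
  {D C : Ω → ℝ} {G : Ω → ℝ → ℝ} {t ε : ℝ}

noncomputable def censoringFactor (D C : Ω → ℝ) (t : ℝ) : Ω → ℝ :=
  {ω | D ω ≤ t}.indicator (fun ω => if min (D ω) t ≤ C ω then 1 else 0) +
    {ω | t < D ω}.indicator (fun ω => if t < C ω then 1 else 0)

theorem condExp_censoringFactor (hm : m ≤ mΩ) (hD : Measurable[m] D) (hε : 0 < ε)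
    (hGpos : ∀ᵐ ω ∂μ, ∀ u ≤ t, ε ≤ G ω u)
    (hCI₁ : μ[fun ω => if min (D ω) t ≤ C ω then (1 : ℝ) else 0 | m]
        =ᵐ[μ] fun ω => G ω (min (D ω) t))
    (hCI₂ : μ[fun ω => if t < C ω then (1 : ℝ) else 0 | m] =ᵐ[μ] fun ω => G ω t) :
    μ[censoringFactor D C t | m] =ᵐ[μ] fun ω => G ω (min (D ω) t) := by
  -- `C` need not be measurable: integrability of its indicators comes from positivity of `G`.
  have hX₁ := integrable_of_condExp_ae_eq_of_ae_ne_zero hCI₁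
    (hGpos.mono fun ω h => (hε.trans_le (h _ (min_le_right _ _))).ne')
  have hX₂ := integrable_of_condExp_ae_eq_of_ae_ne_zero hCI₂
    (hGpos.mono fun ω h => (hε.trans_le (h t le_rfl)).ne')
  have hs₁ : MeasurableSet[m] {ω | D ω ≤ t} := measurableSet_le hD measurable_const
  have hs₂ : MeasurableSet[m] {ω | t < D ω} := measurableSet_lt measurable_const hD
  refine (condExp_add (hX₁.indicator (hm _ hs₁)) (hX₂.indicator (hm _ hs₂)) m).trans ?_
  filter_upwards [condExp_indicator hX₁ hs₁, condExp_indicator hX₂ hs₂, hCI₁, hCI₂]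
    with ω h₁ h₂ hG₁ hG₂
  rw [Pi.add_apply, h₁, h₂]
  by_cases hDt : D ω ≤ t
  · rw [Set.indicator_of_mem (show ω ∈ {ω | D ω ≤ t} from hDt),
      Set.indicator_of_notMem (show ω ∉ {ω | t < D ω} from not_lt.2 hDt), hG₁, add_zero]
  · rw [Set.indicator_of_notMem (show ω ∉ {ω | D ω ≤ t} from hDt),
      Set.indicator_of_mem (show ω ∈ {ω | t < D ω} from not_le.1 hDt), hG₂, zero_add,
      min_eq_right (not_le.1 hDt).le]

theorem condExp_ipcw_truncated_eq_min [IsFiniteMeasure μ] (hm : m ≤ mΩ) (hD : Measurable[m] D)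
    (hε : 0 < ε) (hDpos : ∀ᵐ ω ∂μ, 0 < D ω) (hGpos : ∀ᵐ ω ∂μ, ∀ u ≤ t, ε ≤ G ω u)
    (hCI₁ : μ[fun ω => if min (D ω) t ≤ C ω then (1 : ℝ) else 0 | m]
        =ᵐ[μ] fun ω => G ω (min (D ω) t))
    (hCI₂ : μ[fun ω => if t < C ω then (1 : ℝ) else 0 | m] =ᵐ[μ] fun ω => G ω t) :
    μ[fun ω =>
        ((if min (D ω) (C ω) ≤ t ∧ D ω ≤ C ω then (1 : ℝ) else 0) +
            (if t < min (D ω) (C ω) then (1 : ℝ) else 0)) /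
          G ω (min (min (D ω) (C ω)) t) * min (min (D ω) (C ω)) t | m]
      =ᵐ[μ] fun ω => min (D ω) t := by
  have hS := condExp_censoringFactor hm hD hε hGpos hCI₁ hCI₂
  have hGne : ∀ᵐ ω ∂μ, G ω (min (D ω) t) ≠ 0 :=
    hGpos.mono fun ω h => (hε.trans_le (h _ (min_le_right _ _))).ne'
  set w : Ω → ℝ := fun ω => min (D ω) t / G ω (min (D ω) t)
  -- `G(D ∧ t | Z)` need not be measurable, but it has the measurable version `E[1{D ∧ t ≤ C} | m]`.
  have hw_meas : AEStronglyMeasurable[m] w μ :=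
    ⟨fun ω => min (D ω) t / μ[fun ω => if min (D ω) t ≤ C ω then (1 : ℝ) else 0 | m] ω,
      ((hD.min measurable_const).div stronglyMeasurable_condExp.measurable).stronglyMeasurable,
      hCI₁.mono fun ω h => congrArg (min (D ω) t / ·) h.symm⟩
  have hw_bound : ∀ᵐ ω ∂μ, ‖w ω‖ ≤ |t| / ε := by
    filter_upwards [hDpos, hGpos] with ω hD₀ hG
    have hGε := hG _ (min_le_right (D ω) t)
    have hmin : |min (D ω) t| ≤ |t| := abs_le.2
      ⟨le_min ((neg_nonpos.2 (abs_nonneg t)).trans hD₀.le) (neg_abs_le t),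
        (min_le_right _ _).trans (le_abs_self t)⟩
    rw [norm_div, Real.norm_eq_abs, Real.norm_eq_abs, abs_of_pos (hε.trans_le hGε)]
    exact div_le_div₀ (abs_nonneg t) hmin hε hGε
  calc _ = μ[w * censoringFactor D C t | m] := by
        congr 1; funext ω
        simp only [ipcw_summand_eq, Pi.mul_apply, Pi.add_apply, censoringFactor,
          Set.indicator_apply, Set.mem_ofPred_eq, w]
    _ =ᵐ[μ] w * μ[censoringFactor D C t | m] :=
        condExp_stronglyMeasurable_mul_of_bound₀ hm hw_meas
          (integrable_of_condExp_ae_eq_of_ae_ne_zero hS hGne) _ hw_bound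
    _ =ᵐ[μ] fun ω => min (D ω) t := by
        filter_upwards [hS, hGne] with ω h hne
        simp only [Pi.mul_apply, w, h, div_mul_cancel₀ _ hne]

end

theorem ipcw_restricted_time_unbiased_general
    {Ω : Type*} {mΩ : MeasurableSpace Ω} (μ : Measure Ω) [IsProbabilityMeasure μ]
    (m m' : MeasurableSpace Ω) (hmm' : m ≤ m') (hm' : m' ≤ mΩ)
    (D C : Ω → ℝ) (G : Ω → ℝ → ℝ) (t ε : ℝ) (hε : 0 < ε)
    (hDpos : ∀ᵐ ω ∂μ, 0 < D ω)
    (hDmeas : Measurable[m'] D)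
    (hGpos : ∀ᵐ ω ∂μ, ∀ u ≤ t, ε ≤ G ω u)
    -- conditional independence: E[1{C ≥ D∧t} | D, Z] = G(D∧t | Z)
    (hCI₁ : μ[fun ω => if min (D ω) t ≤ C ω then (1 : ℝ) else 0 | m']
        =ᵐ[μ] fun ω => G ω (min (D ω) t))
    -- conditional independence: E[1{C > t} | D, Z] = G(t | Z)
    (hCI₂ : μ[fun ω => if t < C ω then (1 : ℝ) else 0 | m']
        =ᵐ[μ] fun ω => G ω t) :
    μ[fun ω =>
        ((if min (D ω) (C ω) ≤ t ∧ D ω ≤ C ω then (1 : ℝ) else 0) +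
            (if t < min (D ω) (C ω) then (1 : ℝ) else 0)) /
          G ω (min (min (D ω) (C ω)) t) * min (min (D ω) (C ω)) t | m]
      =ᵐ[μ] μ[fun ω => min (D ω) t | m] :=
  (condExp_condExp_of_le hmm' hm').symm.trans <| condExp_congr_ae <|
    condExp_ipcw_truncated_eq_min hm' hDmeas hε hDpos hGpos hCI₁ hCI₂

/-- IPCW unbiasedness for the restricted survival time: with `U = D ∧ C`,
`Δ = 1{D ≤ C}`, censoring conditionally independent of `D` given `Z` and
positivity, the IPCW-weighted truncated observed time `U ∧ t` is conditionally
unbiased for `D ∧ t` given `Z`. -/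
theorem ipcw_restricted_time_unbiased
    {Ω : Type*} {mΩ : MeasurableSpace Ω} (μ : Measure Ω) [IsProbabilityMeasure μ]
    (m m' : MeasurableSpace Ω) (hmm' : m ≤ m') (hm' : m' ≤ mΩ)
    (D C : Ω → ℝ) (G : Ω → ℝ → ℝ) (t ε : ℝ) (ht : 0 < t) (hε : 0 < ε)
    (hDpos : ∀ᵐ ω ∂μ, 0 < D ω) (hCpos : ∀ᵐ ω ∂μ, 0 < C ω)
    (hDmeas : Measurable[m'] D)
    (hGmeas : ∀ u, StronglyMeasurable[m] (fun ω => G ω u))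
    (hGpos : ∀ᵐ ω ∂μ, ∀ u ≤ t, ε ≤ G ω u)
    (hGle : ∀ᵐ ω ∂μ, ∀ u, G ω u ≤ 1)
    -- conditional independence: E[1{C ≥ D∧t} | D, Z] = G(D∧t | Z)
    (hCI₁ : μ[fun ω => if min (D ω) t ≤ C ω then (1 : ℝ) else 0 | m']
        =ᵐ[μ] fun ω => G ω (min (D ω) t))
    -- conditional independence: E[1{C > t} | D, Z] = G(t | Z)
    (hCI₂ : μ[fun ω => if t < C ω then (1 : ℝ) else 0 | m']
        =ᵐ[μ] fun ω => G ω t) :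
    μ[fun ω =>
        ((if min (D ω) (C ω) ≤ t ∧ D ω ≤ C ω then (1 : ℝ) else 0) +
            (if t < min (D ω) (C ω) then (1 : ℝ) else 0)) /
          G ω (min (min (D ω) (C ω)) t) * min (min (D ω) (C ω)) t | m]
      =ᵐ[μ] μ[fun ω => min (D ω) t | m] :=
  ipcw_restricted_time_unbiased_general μ m m' hmm' hm' D C G t ε hε hDpos hDmeas hGpos hCI₁ hCI₂
end

section
/- In the IPCW setting with recurrent event times T_q ≤ D (q = 1,2,…) and C ⫫ (D, (T_q)) given Z, the weighted recurrent count satisfies E[ (1{U ≤ t}Δ + 1{U > t}) / G(U ∧ t|Z) · Σ_q 1{T_q ≤ U ∧ t} | Z ] = E[ Σ_q 1{T_q ≤ D ∧ t} | Z ], assuming the right side is finite. -/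
/-!
On `{D ≤ t}` the weighted count is `N(D ∧ t) · 1{C ≥ D ∧ t} / G(D ∧ t)`, on `{t < D}` it is
`N(t) · 1{C > t} / G(t)`, and it vanishes otherwise. Both events and `N(D ∧ t)` are measurable
for the full-data σ-algebra `m'`, and by conditional independence each denominator is the
conditional expectation given `m'` of the censoring indicator beside it. Pulling the
`m'`-measurable factors out of `μ[· | m']` cancels the weights, so the conditional expectation
given `m'` is `N(D ∧ t)`, and the tower property passes to `m`.
-/

open MeasureTheory

namespace MeasureTheory

variable {Ω : Type*} {mΩ : MeasurableSpace Ω} {μ : Measure Ω} {m : MeasurableSpace Ω}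

lemma integrable_of_frequently_condExp_ne_zero {f : Ω → ℝ} (h : ∃ᵐ ω ∂μ, μ[f | m] ω ≠ 0) :
    Integrable f μ := by
  by_contra hf
  simp [condExp_of_not_integrable hf] at h

variable {X Y : Ω → ℝ} {ε : ℝ}

lemma integrable_of_le_condExp (hε : 0 < ε) (hXε : ∀ᵐ ω ∂μ, ε ≤ μ[X | m] ω) :
    Integrable X μ := by
  rcases eq_zero_or_neZero μ with rfl | _
  · exact integrable_zero_measure
  · exact integrable_of_frequently_condExp_ne_zero
      (hXε.mono fun _ h => (hε.trans_le h).ne').frequently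

lemma integrable_div_condExp_mul (hm : m ≤ mΩ) (hY : StronglyMeasurable[m] Y)
    (hYint : Integrable Y μ) (hX : ∀ᵐ ω ∂μ, |X ω| ≤ 1) (hε : 0 < ε)
    (hXε : ∀ᵐ ω ∂μ, ε ≤ μ[X | m] ω) :
    Integrable (Y / μ[X | m] * X) μ := by
  refine (hYint.div_const ε).mono ?_ ?_
  · exact ((hY.measurable.div stronglyMeasurable_condExp.measurable).mono hm
      le_rfl).aestronglyMeasurable.mul (integrable_of_le_condExp hε hXε).1
  · filter_upwards [hX, hXε] with ω hX hXε
    rw [Pi.mul_apply, Pi.div_apply, norm_mul, norm_div, norm_div, Real.norm_eq_abs,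
      Real.norm_eq_abs, Real.norm_eq_abs, Real.norm_eq_abs, abs_of_pos (hε.trans_le hXε),
      abs_of_pos hε]
    calc |Y ω| / μ[X | m] ω * |X ω| ≤ |Y ω| / ε * 1 := by gcongr
      _ = |Y ω| / ε := mul_one _

theorem condExp_div_condExp_mul (hm : m ≤ mΩ) (hY : StronglyMeasurable[m] Y)
    (hYint : Integrable Y μ) (hX : ∀ᵐ ω ∂μ, |X ω| ≤ 1) (hε : 0 < ε)
    (hXε : ∀ᵐ ω ∂μ, ε ≤ μ[X | m] ω) :
    μ[Y / μ[X | m] * X | m] =ᵐ[μ] Y := by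
  have hY_div : StronglyMeasurable[m] (Y / μ[X | m]) :=
    (hY.measurable.div stronglyMeasurable_condExp.measurable).stronglyMeasurable
  filter_upwards [condExp_mul_of_stronglyMeasurable_left hY_div
    (integrable_div_condExp_mul hm hY hYint hX hε hXε) (integrable_of_le_condExp hε hXε),
    hXε] with ω hpull hXε
  rw [hpull, Pi.mul_apply, Pi.div_apply, div_mul_cancel₀ _ (hε.trans_le hXε).ne']

theorem condExp_indicator_div_condExp_mul_add {s : Set Ω} {Z : Ω → ℝ} (hm : m ≤ mΩ)
    (hs : MeasurableSet[m] s) (hY : StronglyMeasurable[m] Y) (hYint : Integrable Y μ)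
    (hX : ∀ᵐ ω ∂μ, |X ω| ≤ 1) (hZ : ∀ᵐ ω ∂μ, |Z ω| ≤ 1) (hε : 0 < ε)
    (hXε : ∀ᵐ ω ∂μ, ε ≤ μ[X | m] ω) (hZε : ∀ᵐ ω ∂μ, ε ≤ μ[Z | m] ω) :
    μ[s.indicator Y / μ[X | m] * X + sᶜ.indicator Y / μ[Z | m] * Z | m] =ᵐ[μ] Y := by
  have hYs := hY.indicator hs
  have hYsc := hY.indicator hs.compl
  have hYint_s := hYint.indicator (hm _ hs)
  have hYint_sc := hYint.indicator (hm _ hs.compl)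
  calc _ =ᵐ[μ] μ[s.indicator Y / μ[X | m] * X | m] + μ[sᶜ.indicator Y / μ[Z | m] * Z | m] :=
        condExp_add (integrable_div_condExp_mul hm hYs hYint_s hX hε hXε)
          (integrable_div_condExp_mul hm hYsc hYint_sc hZ hε hZε) m
    _ =ᵐ[μ] s.indicator Y + sᶜ.indicator Y :=
        (condExp_div_condExp_mul hm hYs hYint_s hX hε hXε).add
          (condExp_div_condExp_mul hm hYsc hYint_sc hZ hε hZε)
    _ = Y := s.indicator_self_add_compl Y

end MeasureTheory

lemma measurable_tsum_ite_le {Ω ι : Type*} [Countable ι] {m : MeasurableSpace Ω}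
    {T : ι → Ω → ℝ} {S : Ω → ℝ} (hT : ∀ q, Measurable[m] (T q)) (hS : Measurable[m] S) :
    Measurable[m] fun ω => ∑' q, if T q ω ≤ S ω then (1 : ℝ) else 0 :=
  Measurable.tsum fun q => Measurable.ite (measurableSet_le (hT q) hS) measurable_const
    measurable_const

lemma ipcw_weight_mul_eq (d c t : ℝ) (g n : ℝ → ℝ) :
    ((if min d c ≤ t ∧ d ≤ c then (1 : ℝ) else 0) + (if t < min d c then (1 : ℝ) else 0)) /
        g (min (min d c) t) * n (min (min d c) t) =
      (if d ≤ t then n (min d t) else 0) / g (min d t) * (if min d t ≤ c then 1 else 0) +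
        (if d ≤ t then 0 else n (min d t)) / g t * (if t < c then 1 else 0) := by
  rcases le_or_gt d t with hdt | htd <;> rcases le_or_gt d c with hdc | hcd
  · simp [hdt, hdc, not_lt.2 hdt, inv_mul_eq_div]
  · simp [hdt, hcd.not_ge, min_eq_right hcd.le, hcd.le.trans hdt, not_lt.2 (hcd.le.trans hdt)]
  · simp [htd, hdc, htd.not_ge, min_eq_right htd.le, htd.trans_le hdc, inv_mul_eq_div]
  · rcases le_or_gt c t with hct | htc
    · simp [htd.not_ge, hcd.not_ge, min_eq_right hcd.le, hct, not_lt.2 hct, min_eq_right htd.le]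
    · simp [htd.not_ge, min_eq_right htd.le, htc, lt_min htd htc, hcd.not_ge,
        min_eq_right (lt_min htd htc).le, inv_mul_eq_div]

theorem ipcw_recurrent_count_unbiased_general
    {Ω : Type*} {mΩ : MeasurableSpace Ω} (μ : Measure Ω) [IsProbabilityMeasure μ]
    (m m' : MeasurableSpace Ω) (hmm' : m ≤ m') (hm' : m' ≤ mΩ)
    (D C : Ω → ℝ) (T : ℕ → Ω → ℝ) (G : Ω → ℝ → ℝ) (N : Ω → ℝ → ℝ)
    (t ε : ℝ) (hε : 0 < ε)
    (hN : ∀ ω s, N ω s = ∑' q : ℕ, if T q ω ≤ s then (1 : ℝ) else 0)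
    (hDmeas : Measurable[m'] D) (hTmeas : ∀ q, Measurable[m'] (T q))
    (hGpos : ∀ᵐ ω ∂μ, ∀ u ≤ t, ε ≤ G ω u)
    (hNint : Integrable (fun ω => N ω (min (D ω) t)) μ)
    -- conditional independence: E[1{C ≥ D∧t} | D, (T_q), Z] = G(D∧t | Z)
    (hCI₁ : μ[fun ω => if min (D ω) t ≤ C ω then (1 : ℝ) else 0 | m']
        =ᵐ[μ] fun ω => G ω (min (D ω) t))
    -- conditional independence: E[1{C > t} | D, (T_q), Z] = G(t | Z)
    (hCI₂ : μ[fun ω => if t < C ω then (1 : ℝ) else 0 | m']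
        =ᵐ[μ] fun ω => G ω t) :
    μ[fun ω =>
        ((if min (D ω) (C ω) ≤ t ∧ D ω ≤ C ω then (1 : ℝ) else 0) +
            (if t < min (D ω) (C ω) then (1 : ℝ) else 0)) /
          G ω (min (min (D ω) (C ω)) t) * N ω (min (min (D ω) (C ω)) t) | m]
      =ᵐ[μ] μ[fun ω => N ω (min (D ω) t) | m] := by
  set X : Ω → ℝ := fun ω => if min (D ω) t ≤ C ω then 1 else 0
  set Y : Ω → ℝ := fun ω => if t < C ω then 1 else 0
  set Nt : Ω → ℝ := fun ω => N ω (min (D ω) t)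
  set s : Set Ω := {ω | D ω ≤ t}
  have hs : MeasurableSet[m'] s := measurableSet_le hDmeas measurable_const
  have hNt : StronglyMeasurable[m'] Nt := by
    simp only [Nt, hN]
    exact (measurable_tsum_ite_le hTmeas (hDmeas.min measurable_const)).stronglyMeasurable
  have hX : ∀ᵐ ω ∂μ, |X ω| ≤ 1 := ae_of_all _ fun ω => by simp only [X]; split_ifs <;> norm_num
  have hY : ∀ᵐ ω ∂μ, |Y ω| ≤ 1 := ae_of_all _ fun ω => by simp only [Y]; split_ifs <;> norm_num
  have hXε : ∀ᵐ ω ∂μ, ε ≤ μ[X | m'] ω := by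
    filter_upwards [hCI₁, hGpos] with ω hCI hG
    exact hCI ▸ hG _ (min_le_right _ _)
  have hYε : ∀ᵐ ω ∂μ, ε ≤ μ[Y | m'] ω := by
    filter_upwards [hCI₂, hGpos] with ω hCI hG
    exact hCI ▸ hG t le_rfl
  refine (condExp_condExp_of_le hmm' hm').symm.trans (condExp_congr_ae ?_)
  refine (condExp_congr_ae ?_).trans
    (condExp_indicator_div_condExp_mul_add hm' hs hNt hNint hX hY hε hXε hYε)
  filter_upwards [hCI₁, hCI₂] with ω hCI₁ hCI₂
  simp only [Pi.add_apply, Pi.mul_apply, Pi.div_apply, hCI₁, hCI₂, Set.indicator_apply,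
    Set.mem_compl_iff, Set.mem_ofPred_eq, ite_not, s, X, Y, Nt]
  exact ipcw_weight_mul_eq _ _ _ _ _

/-- IPCW unbiasedness for recurrent-event counts: with recurrent event times
`T_q ≤ D`, `U = D ∧ C`, `Δ = 1{D ≤ C}`, and censoring conditionally independent
of `(D, (T_q))` given `Z`, the IPCW-weighted observed count
`Σ_q 1{T_q ≤ U ∧ t}` is conditionally unbiased for the full-data count
`Σ_q 1{T_q ≤ D ∧ t}` given `Z`, assuming the latter is integrable. -/
theorem ipcw_recurrent_count_unbiased
    {Ω : Type*} {mΩ : MeasurableSpace Ω} (μ : Measure Ω) [IsProbabilityMeasure μ]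
    (m m' : MeasurableSpace Ω) (hmm' : m ≤ m') (hm' : m' ≤ mΩ)
    (D C : Ω → ℝ) (T : ℕ → Ω → ℝ) (G : Ω → ℝ → ℝ) (N : Ω → ℝ → ℝ)
    (t ε : ℝ) (ht : 0 < t) (hε : 0 < ε)
    (hDpos : ∀ᵐ ω ∂μ, 0 < D ω) (hCpos : ∀ᵐ ω ∂μ, 0 < C ω)
    (hTD : ∀ q ω, T q ω ≤ D ω)
    (hN : ∀ ω s, N ω s = ∑' q : ℕ, if T q ω ≤ s then (1 : ℝ) else 0)
    (hDmeas : Measurable[m'] D) (hTmeas : ∀ q, Measurable[m'] (T q))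
    (hGmeas : ∀ u, StronglyMeasurable[m] (fun ω => G ω u))
    (hGpos : ∀ᵐ ω ∂μ, ∀ u ≤ t, ε ≤ G ω u)
    (hGle : ∀ᵐ ω ∂μ, ∀ u, G ω u ≤ 1)
    (hNint : Integrable (fun ω => N ω (min (D ω) t)) μ)
    -- conditional independence: E[1{C ≥ D∧t} | D, (T_q), Z] = G(D∧t | Z)
    (hCI₁ : μ[fun ω => if min (D ω) t ≤ C ω then (1 : ℝ) else 0 | m']
        =ᵐ[μ] fun ω => G ω (min (D ω) t))
    -- conditional independence: E[1{C > t} | D, (T_q), Z] = G(t | Z)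
    (hCI₂ : μ[fun ω => if t < C ω then (1 : ℝ) else 0 | m']
        =ᵐ[μ] fun ω => G ω t) :
    μ[fun ω =>
        ((if min (D ω) (C ω) ≤ t ∧ D ω ≤ C ω then (1 : ℝ) else 0) +
            (if t < min (D ω) (C ω) then (1 : ℝ) else 0)) /
          G ω (min (min (D ω) (C ω)) t) * N ω (min (min (D ω) (C ω)) t) | m]
      =ᵐ[μ] μ[fun ω => N ω (min (D ω) t) | m] :=
  ipcw_recurrent_count_unbiased_general μ m m' hmm' hm' D C T G N t ε hε hN hDmeas hTmeas hGpos
    hNint hCI₁ hCI₂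
end
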